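/- In the braid group B_5, the word σ1 σ1 σ2 σ1⁻¹ σ2 σ1 σ3 σ2⁻¹ σ3 σ4 σ3⁻¹ σ4 (a braid representative of the knot 11n63) equals the product of the positive bands of its band decomposition with band centers {1, 2, 5, 7, 10, 12}; in particular, this braid is quasipositive. -/

import Mathlib

/-!
The band decomposition telescopes: if `α_p` is the product of the non-center letters before
position `p`, then the bands at the centers up to position `k`, multiplied in order, give the
first `k` letters of the word times `α_(k+1)⁻¹`. Hence a word equals the product of its bands
exactly when its non-center letters multiply to `1`; for the word of `11n63` they are
`σ₂ σ₁⁻¹ σ₁ σ₂⁻¹ σ₃ σ₃⁻¹`, which cancels freely. A band centered at a positive letter is a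
positive band, so the braid is quasipositive.
-/

/-- The Artin relations for the braid group with `m` generators
`σ_1, …, σ_m` (indexed by `Fin m`), i.e. the braid group `B_{m+1}`:
`σ_i σ_j = σ_j σ_i` for `|i - j| ≥ 2`, and
`σ_i σ_{i+1} σ_i = σ_{i+1} σ_i σ_{i+1}`. -/
def braidRels (m : ℕ) : Set (FreeGroup (Fin m)) :=
  { r | (∃ i j : Fin m, (i : ℕ) + 2 ≤ (j : ℕ) ∧
          r = FreeGroup.of i * FreeGroup.of j * (FreeGroup.of i)⁻¹ * (FreeGroup.of j)⁻¹) ∨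
        (∃ i j : Fin m, (i : ℕ) + 1 = (j : ℕ) ∧
          r = FreeGroup.of i * FreeGroup.of j * FreeGroup.of i *
              (FreeGroup.of j)⁻¹ * (FreeGroup.of i)⁻¹ * (FreeGroup.of j)⁻¹) }

/-- The braid group `B_{m+1}`, presented with `m` Artin generators.
Here index `i : Fin m` corresponds to the Artin generator `σ_{i+1}`. -/
abbrev BraidGrp (m : ℕ) := PresentedGroup (braidRels m)

/-- The Artin generator `σ_{i+1}` of the braid group `B_{m+1}`. -/
def σ {m : ℕ} (i : Fin m) : BraidGrp m := PresentedGroup.of i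

/-- A letter of a braid word: a generator index together with a sign
(`true` = the positive generator, `false` = its inverse). -/
abbrev Letter (m : ℕ) := Fin m × Bool

/-- The group element represented by a letter. -/
def letterEl {m : ℕ} (x : Letter m) : BraidGrp m :=
  if x.2 then σ x.1 else (σ x.1)⁻¹

/-- The group element represented by a braid word. -/
def wordProd {m : ℕ} (w : List (Letter m)) : BraidGrp m :=
  (w.map letterEl).prod

/-- The band of the band decomposition of the word `w` with band centers `S`
(1-based positions) at center `p`: namely `α_p * x_p * α_p⁻¹`, where `x_p` is
the letter of `w` at position `p` and `α_p` is the product, in increasing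
order of position, of the letters of `w` at positions `q < p` with `q ∉ S`. -/
def band {m : ℕ} (w : List (Letter m)) (S : List ℕ) (p : ℕ) : BraidGrp m :=
  let α : BraidGrp m :=
    wordProd (((w.zipIdx.map Prod.swap).filter fun qx => decide (qx.1 + 1 < p ∧ qx.1 + 1 ∉ S)).map Prod.snd)
  match w[p - 1]? with
  | some x => α * letterEl x * α⁻¹
  | none => 1

/-- The product, in increasing order of band center, of the bands of the
band decomposition of the word `w` with band centers `S`. -/
def bandProd {m : ℕ} (w : List (Letter m)) (S : List ℕ) : BraidGrp m :=
  (S.map (band w S)).prod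

/-- A positive band in the braid group: a conjugate `α σ_j α⁻¹` of a generator. -/
def IsPositiveBand {m : ℕ} (x : BraidGrp m) : Prop :=
  ∃ (α : BraidGrp m) (j : Fin m), x = α * σ j * α⁻¹

/-- A braid is quasipositive if it is a product of positive bands. -/
def IsQuasipositive {m : ℕ} (x : BraidGrp m) : Prop :=
  ∃ l : List (BraidGrp m), (∀ b ∈ l, IsPositiveBand b) ∧ x = l.prod

/-- A negative band in the braid group: a conjugate `α σ_j⁻¹ α⁻¹` of the
inverse of a generator. -/
def IsNegativeBand {m : ℕ} (x : BraidGrp m) : Prop :=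
  ∃ (α : BraidGrp m) (j : Fin m), x = α * (σ j)⁻¹ * α⁻¹

/-- A braid is quasinegative if it is a product of negative bands. -/
def IsQuasinegative {m : ℕ} (x : BraidGrp m) : Prop :=
  ∃ l : List (BraidGrp m), (∀ b ∈ l, IsNegativeBand b) ∧ x = l.prod

/-- The braid word for the knot `11n63` (letter `(i, true)` is `σ_(i+1)`,
`(i, false)` is `σ_(i+1)⁻¹`). -/
def theWord : List (Letter 4) :=
  [(0, true), (0, true), (1, true), (0, false), (1, true), (0, true), (2, true), (1, false), (2, true), (3, true), (2, false), (3, true)]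

/-- The band centers. -/
def theCenters : List ℕ := [1, 2, 5, 7, 10, 12]

open List

section BandDecomposition

variable {m : ℕ}

def bandConjugator (w : List (Letter m)) (S : List ℕ) (p : ℕ) : BraidGrp m :=
  wordProd (((w.zipIdx.map Prod.swap).filter
    fun qx => decide (qx.1 + 1 < p ∧ qx.1 + 1 ∉ S)).map Prod.snd)

theorem wordProd_append (v w : List (Letter m)) : wordProd (v ++ w) = wordProd v * wordProd w := by
  simp [wordProd]

theorem wordProd_singleton (x : Letter m) : wordProd [x] = letterEl x := by
  simp [wordProd]

theorem band_eq_of_getElem? {w : List (Letter m)} {S : List ℕ} {p : ℕ} {x : Letter m}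
    (h : w[p - 1]? = some x) :
    band w S p = bandConjugator w S p * letterEl x * (bandConjugator w S p)⁻¹ := by
  simp only [band, h, bandConjugator]

theorem bandConjugator_append_singleton (w : List (Letter m)) (x : Letter m) (S : List ℕ)
    (p : ℕ) :
    bandConjugator (w ++ [x]) S p =
      bandConjugator w S p * if w.length + 1 < p ∧ w.length + 1 ∉ S then letterEl x else 1 := by
  simp only [bandConjugator, zipIdx_append, zipIdx_singleton, map_append, filter_append,
    wordProd_append, zero_add]
  split_ifs with h <;> simp [h, wordProd]

theorem bandConjugator_of_length_lt {w : List (Letter m)} {S : List ℕ} {p : ℕ}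
    (hp : w.length < p) :
    bandConjugator w S p = bandConjugator w S (w.length + 1) := by
  unfold bandConjugator
  congr 2
  refine filter_congr fun qx hqx => ?_
  obtain ⟨⟨x, q⟩, hxq, rfl⟩ := mem_map.1 hqx
  have hq := (mem_zipIdx hxq).2.1
  simp only [Prod.swap_prod_mk, decide_eq_decide]
  constructor <;> rintro ⟨-, h⟩ <;> exact ⟨by omega, h⟩

theorem band_append_singleton {w : List (Letter m)} (x : Letter m) (S : List ℕ) {p : ℕ}
    (hp : 1 ≤ p ∧ p ≤ w.length) : band (w ++ [x]) S p = band w S p := by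
  have hp' : p - 1 < w.length := by omega
  have hy : w[p - 1]? = some w[p - 1] := getElem?_eq_getElem hp'
  have hy' : (w ++ [x])[p - 1]? = some w[p - 1] := by rw [getElem?_append_left hp', hy]
  rw [band_eq_of_getElem? hy, band_eq_of_getElem? hy', bandConjugator_append_singleton,
    if_neg (by omega), mul_one]

theorem prod_map_band_filter_range' (w : List (Letter m)) (S : List ℕ) :
    (((range' 1 w.length).filter (· ∈ S)).map (band w S)).prod =
      wordProd w * (bandConjugator w S (w.length + 1))⁻¹ := by
  induction w using List.reverseRecOn with
  | nil => simp [bandConjugator, wordProd]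
  | append_singleton w x ih =>
    have hbands : ((range' 1 w.length).filter (· ∈ S)).map (band (w ++ [x]) S) =
        ((range' 1 w.length).filter (· ∈ S)).map (band w S) :=
      map_congr_left fun p hp => band_append_singleton x S (by simp at hp; omega)
    have hlast : band (w ++ [x]) S (w.length + 1) =
        bandConjugator w S (w.length + 1) * letterEl x * (bandConjugator w S (w.length + 1))⁻¹ := by
      rw [band_eq_of_getElem? (x := x) (by simp), bandConjugator_append_singleton,
        if_neg (by omega), mul_one]
    rw [length_append, length_singleton, range'_concat, one_mul, add_comm 1, filter_append,
      map_append, prod_append, hbands, ih, bandConjugator_append_singleton,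
      bandConjugator_of_length_lt (p := w.length + 1 + 1) (by omega), wordProd_append,
      wordProd_singleton]
    by_cases hS : w.length + 1 ∈ S
    · rw [filter_cons_of_pos (by simpa), filter_nil, map_singleton, prod_singleton, hlast,
        if_neg (not_and_of_not_right _ (not_not.2 hS)), mul_one]
      group
    · rw [filter_cons_of_neg (by simpa), filter_nil, map_nil, prod_nil, mul_one,
        if_pos ⟨by omega, hS⟩]
      group

theorem filter_range'_mem_eq_self {S : List ℕ} {n : ℕ} (hS : S.Pairwise (· < ·))
    (hS_range : ∀ p ∈ S, 1 ≤ p ∧ p ≤ n) : (range' 1 n).filter (· ∈ S) = S := by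
  have hsorted : ((range' 1 n).filter (· ∈ S)).Pairwise (· < ·) := (pairwise_lt_range' 1).filter _
  refine (Perm.eq_of_pairwise (fun a b _ _ hab hba => absurd (hab.trans hba) (lt_irrefl a))
    hsorted hS ((perm_ext_iff_of_nodup hsorted.nodup hS.nodup).2 fun p => ?_))
  simp only [mem_filter, mem_range'_1, decide_eq_true_eq, and_iff_right_iff_imp]
  intro hp
  have := hS_range p hp
  omega

theorem bandProd_eq_wordProd_mul_inv {w : List (Letter m)} {S : List ℕ}
    (hS : S.Pairwise (· < ·)) (hS_range : ∀ p ∈ S, 1 ≤ p ∧ p ≤ w.length) :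
    bandProd w S = wordProd w * (bandConjugator w S (w.length + 1))⁻¹ := by
  rw [bandProd, ← prod_map_band_filter_range', filter_range'_mem_eq_self hS hS_range]

theorem isPositiveBand_band {w : List (Letter m)} (S : List ℕ) {p : ℕ} {j : Fin m}
    (h : w[p - 1]? = some (j, true)) : IsPositiveBand (band w S p) :=
  ⟨bandConjugator w S p, j, band_eq_of_getElem? h⟩

theorem isQuasipositive_bandProd {w : List (Letter m)} {S : List ℕ}
    (hS : ∀ p ∈ S, ∃ j, w[p - 1]? = some (j, true)) : IsQuasipositive (bandProd w S) :=
  ⟨S.map (band w S), fun _ hb => by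
    obtain ⟨p, hp, rfl⟩ := mem_map.1 hb
    obtain ⟨j, hj⟩ := hS p hp
    exact isPositiveBand_band S hj, rfl⟩

end BandDecomposition

theorem bandConjugator_theWord_theCenters :
    bandConjugator theWord theCenters (theWord.length + 1) = 1 := by
  simp [bandConjugator, theWord, theCenters, wordProd, letterEl]

/-- The braid representative of `11n63` equals the product of the bands of its
band decomposition with the given band centers; in particular it is quasipositive. -/
theorem knot_11n63_quasipositive :
    wordProd theWord = bandProd theWord theCenters ∧
      IsQuasipositive (wordProd theWord) := by
  have h : wordProd theWord = bandProd theWord theCenters := by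
    rw [bandProd_eq_wordProd_mul_inv (by decide) (by decide), bandConjugator_theWord_theCenters,
      inv_one, mul_one]
  exact ⟨h, h ▸ isQuasipositive_bandProd (by decide)⟩
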